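/- arXiv:math/0506167 — 2 statements merged into one kernel-verified Lean document; each statement's English description precedes it below -/
import Mathlib

section
/- For any integers t ≥ 3 and k ≥ 1, there exists a finite simple graph G containing no induced subgraph isomorphic to the star K_{1,t} such that χ(G) = k and the b-chromatic number of G satisfies φ(G) = (t-1)(k-1) + 1. -/
open SimpleGraph

/-- A proper coloring of `G` with exactly `b` colors is a *b-coloring* if each color class
contains a vertex adjacent to at least one vertex of every other color class. -/
def IsBColoring {V : Type*} (G : SimpleGraph V) (b : ℕ) (c : V → Fin b) : Prop :=
  (∀ v w, G.Adj v w → c v ≠ c w) ∧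
  ∀ i : Fin b, ∃ v, c v = i ∧ ∀ j : Fin b, j ≠ c v → ∃ w, G.Adj v w ∧ c w = j

/-- The b-chromatic number `φ(G)`: the largest `b` such that `G` admits a b-coloring
with `b` colors. -/
noncomputable def bChromaticNumber {V : Type*} (G : SimpleGraph V) : ℕ :=
  sSup {b | ∃ c : V → Fin b, IsBColoring G b c}

/-- `G` is `K_{1,t}`-free: `G` contains no induced subgraph isomorphic to the star
`K_{1,t}` (graph embeddings are exactly induced subgraph containments). -/
def StarFree {V : Type*} (t : ℕ) (G : SimpleGraph V) : Prop :=
  IsEmpty (completeBipartiteGraph (Fin 1) (Fin t) ↪g G)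

/-! ### Auxiliary construction -/

/-- The extremal graph: `b = (t-1)(k-1)+1` centers `(i,0)`, each with `b-1` leaves
`(i,x)`, `x ≠ 0`, partitioned into `t-1` cliques of size `k-1` according to
`(x-1)/(k-1)`. -/
def BGraph (t k : ℕ) : SimpleGraph (Fin ((t-1)*(k-1)+1) × Fin ((t-1)*(k-1)+1)) where
  Adj p q := p.1 = q.1 ∧ p.2 ≠ q.2 ∧
    (p.2.val = 0 ∨ q.2.val = 0 ∨ (p.2.val - 1)/(k-1) = (q.2.val - 1)/(k-1))
  symm := by
    constructor
    rintro p q ⟨h1, h2, h3⟩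
    exact ⟨h1.symm, Ne.symm h2, by tauto⟩
  loopless := by constructor; rintro p ⟨-, h, -⟩; exact h rfl

lemma quot_lt {t k y : ℕ} (h1 : 1 ≤ y) (h2 : y < (t-1)*(k-1)+1) :
    (y - 1) / (k-1) < t - 1 := by
  rcases Nat.eq_zero_or_pos (k-1) with h | h
  · have hz : (t-1)*(k-1) = 0 := by rw [h, Nat.mul_zero]
    omega
  · have h3 : y - 1 < (t-1)*(k-1) := by omega
    exact (Nat.div_lt_iff_lt_mul h).mpr h3

lemma bgraph_starFree (t k : ℕ) (ht : 3 ≤ t) : StarFree t (BGraph t k) := by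
  constructor
  intro f
  set b := (t-1)*(k-1)+1 with hbdef
  set v := f (Sum.inl 0) with hv
  have hadj : ∀ j : Fin t, (BGraph t k).Adj v (f (Sum.inr j)) := by
    intro j
    exact f.map_rel_iff.mpr (by simp)
  have hnadj : ∀ j j' : Fin t, j ≠ j' → ¬ (BGraph t k).Adj (f (Sum.inr j)) (f (Sum.inr j')) := by
    intro j j' _ h
    exact (by simp : ¬ (completeBipartiteGraph (Fin 1) (Fin t)).Adj (Sum.inr j) (Sum.inr j'))
      (f.map_rel_iff.mp h)
  have hfst : ∀ j : Fin t, (f (Sum.inr j)).1 = v.1 := fun j => ((hadj j).1).symm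
  have hne2 : ∀ j : Fin t, (f (Sum.inr j)).2 ≠ v.2 := fun j => Ne.symm (hadj j).2.1
  by_cases hv0 : v.2.val = 0
  · -- center case: pigeonhole on cliques
    have hy0 : ∀ j : Fin t, 1 ≤ (f (Sum.inr j)).2.val := by
      intro j
      have := hne2 j
      rcases Nat.eq_zero_or_pos (f (Sum.inr j)).2.val with h0 | h0
      · exact absurd (Fin.ext (by omega) : (f (Sum.inr j)).2 = v.2) this
      · exact h0
    have hlt : ∀ j : Fin t, ((f (Sum.inr j)).2.val - 1) / (k-1) < t - 1 := by
      intro j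
      exact quot_lt (hy0 j) ((f (Sum.inr j)).2.isLt)
    have htpos : 0 < t - 1 := by omega
    set g : Fin t → Fin (t-1) := fun j => ⟨((f (Sum.inr j)).2.val - 1) / (k-1), hlt j⟩ with hg
    have hginj : Function.Injective g := by
      intro j j' hjj
      by_contra hne
      apply hnadj j j' hne
      refine ⟨(hfst j).trans (hfst j').symm, ?_, ?_⟩
      · intro h
        have : f (Sum.inr j) = f (Sum.inr j') := Prod.ext ((hfst j).trans (hfst j').symm) h
        exact hne (Sum.inr_injective (f.injective this))
      · right; right
        exact congrArg Fin.val hjj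
    have := Fintype.card_le_of_injective g hginj
    simp only [Fintype.card_fin] at this
    omega
  · -- leaf case: any two neighbours of a leaf are adjacent
    set j0 : Fin t := ⟨0, by omega⟩ with hj0
    set j1 : Fin t := ⟨1, by omega⟩ with hj1
    have h01 : j0 ≠ j1 := by
      intro h
      have : (0 : ℕ) = 1 := congrArg Fin.val h
      omega
    apply hnadj j0 j1 h01
    have had0 := hadj j0
    have had1 := hadj j1
    refine ⟨(hfst j0).trans (hfst j1).symm, ?_, ?_⟩
    · intro h
      have : f (Sum.inr j0) = f (Sum.inr j1) := Prod.ext ((hfst j0).trans (hfst j1).symm) h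
      exact h01 (Sum.inr_injective (f.injective this))
    · by_cases h0 : (f (Sum.inr j0)).2.val = 0
      · exact Or.inl h0
      by_cases h1 : (f (Sum.inr j1)).2.val = 0
      · exact Or.inr (Or.inl h1)
      right; right
      have e0 : (v.2.val - 1)/(k-1) = ((f (Sum.inr j0)).2.val - 1)/(k-1) := by
        rcases had0.2.2 with h | h | h
        · omega
        · omega
        · exact h
      have e1 : (v.2.val - 1)/(k-1) = ((f (Sum.inr j1)).2.val - 1)/(k-1) := by
        rcases had1.2.2 with h | h | h
        · omega
        · omega
        · exact h
      omega

lemma bgraph_chromatic (t k : ℕ) (ht : 3 ≤ t) (hk : 1 ≤ k) :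
    (BGraph t k).chromaticNumber = (k : ℕ∞) := by
  apply le_antisymm
  · -- colorable with k colors
    have hcol : (BGraph t k).Colorable k := by
      refine ⟨Coloring.mk (fun p => if h : p.2.val = 0 then ⟨0, hk⟩
        else ⟨(p.2.val - 1) % (k-1) + 1, ?_⟩) ?_⟩
      · by_cases h2 : 2 ≤ k
        · have := Nat.mod_lt (p.2.val - 1) (y := k-1) (by omega)
          omega
        · exfalso
          have hk1 : k = 1 := by omega
          have hz : (t-1)*(k-1) = 0 := by simp [hk1]
          have hp := p.2.isLt
          omega
      · rintro p q ⟨h1, h2, h3⟩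
        have hval : p.2.val ≠ q.2.val := fun h => h2 (Fin.ext h)
        by_cases hp : p.2.val = 0 <;> by_cases hq : q.2.val = 0
        · omega
        · intro h
          simp only [dif_pos hp, dif_neg hq, Fin.mk.injEq] at h
          omega
        · intro h
          simp only [dif_neg hp, dif_pos hq, Fin.mk.injEq] at h
          omega
        · intro h
          simp only [dif_neg hp, dif_neg hq, Fin.mk.injEq] at h
          have hmod : (p.2.val - 1) % (k-1) + 1 = (q.2.val - 1) % (k-1) + 1 := by omega
          have hquot : (p.2.val - 1)/(k-1) = (q.2.val - 1)/(k-1) := by tauto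
          have d1 := Nat.div_add_mod (p.2.val - 1) (k-1)
          have d2 := Nat.div_add_mod (q.2.val - 1) (k-1)
          rw [hquot] at d1
          omega
    exact hcol.chromaticNumber_le
  · -- contains K_k
    have hbpos : 0 < (t-1)*(k-1)+1 := Nat.succ_pos _
    have hkb : ∀ a : Fin k, a.val < (t-1)*(k-1)+1 := by
      intro a
      have h1 : 1*(k-1) ≤ (t-1)*(k-1) := Nat.mul_le_mul_right _ (by omega)
      have := a.isLt
      omega
    have emb : (⊤ : SimpleGraph (Fin k)) ↪g (BGraph t k) := by
      refine ⟨⟨fun a => (⟨0, hbpos⟩, ⟨a.val, hkb a⟩), fun a a' h => ?_⟩, ?_⟩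
      · have : a.val = a'.val := congrArg (fun p : Fin _ × Fin _ => p.2.val) h
        exact Fin.ext this
      · intro a a'
        constructor
        · rintro ⟨-, h2, -⟩
          intro h; apply h2; rw [h]
        · intro h
          have hne : a ≠ a' := h.ne
          refine ⟨rfl, ?_, ?_⟩
          · intro hc
            apply hne
            have hc' : (⟨a.val, hkb a⟩ : Fin ((t-1)*(k-1)+1)) = ⟨a'.val, hkb a'⟩ := hc
            have : a.val = a'.val := by
              have := congrArg Fin.val hc'
              simpa using this
            exact Fin.ext this
          · by_cases ha : a.val = 0
            · exact Or.inl ha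
            by_cases ha' : a'.val = 0
            · exact Or.inr (Or.inl ha')
            right; right
            show (a.val - 1) / (k-1) = (a'.val - 1) / (k-1)
            have l1 : (a.val - 1) < k - 1 := by omega
            have l2 : (a'.val - 1) < k - 1 := by omega
            rw [Nat.div_eq_of_lt l1, Nat.div_eq_of_lt l2]
    have := chromaticNumber_mono_of_hom emb.toHom
    rwa [chromaticNumber_top, Fintype.card_fin] at this

lemma card_ne_fin (n : ℕ) (a : Fin n) : Fintype.card {x : Fin n // x ≠ a} = n - 1 := by
  simp [Fintype.card_subtype_compl]

lemma bgraph_bcoloring_greatest (t k : ℕ) (ht : 3 ≤ t) (hk : 1 ≤ k) :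
    IsGreatest {b | ∃ c : (Fin ((t-1)*(k-1)+1) × Fin ((t-1)*(k-1)+1)) → Fin b,
      IsBColoring (BGraph t k) b c} ((t-1)*(k-1)+1) := by
  constructor
  · -- membership: the canonical b-coloring
    refine ⟨fun p => p.1 + p.2, ?_, ?_⟩
    · rintro p q ⟨h1, h2, -⟩
      show p.1 + p.2 ≠ q.1 + q.2
      rw [h1]
      intro h
      exact h2 (add_left_cancel h)
    · intro i
      refine ⟨(i, 0), by simp, ?_⟩
      intro j hj
      have hj : j ≠ i := by simpa using hj
      refine ⟨(i, j - i), ⟨rfl, ?_, Or.inl ?_⟩, ?_⟩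
      · intro h
        apply hj
        have : j - i = 0 := h.symm
        exact (sub_eq_zero.mp this)
      · simp
      · show i + (j - i) = j
        exact (add_comm i (j - i)).trans (sub_add_cancel j i)
  · -- upper bound
    rintro b' ⟨c, hc⟩
    by_contra hgt
    push_neg at hgt
    have hb'pos : 0 < b' := by omega
    obtain ⟨v, hv, hB⟩ := hc.2 ⟨0, hb'pos⟩
    set W : {j : Fin b' // j ≠ c v} → _ := fun j => Classical.choose (hB j.1 j.2) with hW
    have hWspec : ∀ j : {j : Fin b' // j ≠ c v},
        (BGraph t k).Adj v (W j) ∧ c (W j) = j.1 :=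
      fun j => Classical.choose_spec (hB j.1 j.2)
    set F : {j : Fin b' // j ≠ c v} → {y : Fin ((t-1)*(k-1)+1) // y ≠ v.2} :=
      fun j => ⟨(W j).2, Ne.symm (hWspec j).1.2.1⟩ with hF
    have hFinj : Function.Injective F := by
      intro j j' h
      have h2 : (W j).2 = (W j').2 := congrArg Subtype.val h
      have h1 : (W j).1 = (W j').1 := by
        rw [← (hWspec j).1.1, ← (hWspec j').1.1]
      have hww : W j = W j' := Prod.ext h1 h2
      have : j.1 = j'.1 := by rw [← (hWspec j).2, ← (hWspec j').2, hww]
      exact Subtype.ext this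
    have hcard := Fintype.card_le_of_injective F hFinj
    rw [card_ne_fin, card_ne_fin] at hcard
    omega

lemma bgraph_bchromatic (t k : ℕ) (ht : 3 ≤ t) (hk : 1 ≤ k) :
    bChromaticNumber (BGraph t k) = (t-1)*(k-1)+1 :=
  (bgraph_bcoloring_greatest t k ht hk).csSup_eq

/-! ### Transfer along an isomorphism -/

lemma IsBColoring.of_iso {V W : Type*} {G : SimpleGraph V} {H : SimpleGraph W}
    (φ : G ≃g H) {b : ℕ} {c : V → Fin b} (h : IsBColoring G b c) :
    IsBColoring H b (c ∘ φ.symm) := by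
  constructor
  · intro v w hvw
    exact h.1 _ _ (φ.symm.map_rel_iff.mpr hvw)
  · intro i
    obtain ⟨v, hv, hB⟩ := h.2 i
    refine ⟨φ v, by simp [hv], ?_⟩
    intro j hj
    rw [Function.comp_apply, φ.symm_apply_apply] at hj
    obtain ⟨w, hw, hcw⟩ := hB j hj
    refine ⟨φ w, φ.symm.map_rel_iff.mp (by simpa using hw), by simpa using hcw⟩

lemma bChromaticNumber_iso {V W : Type*} {G : SimpleGraph V} {H : SimpleGraph W}
    (φ : G ≃g H) : bChromaticNumber G = bChromaticNumber H := by
  unfold bChromaticNumber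
  congr 1
  ext b
  constructor
  · rintro ⟨c, hc⟩; exact ⟨c ∘ φ.symm, hc.of_iso φ⟩
  · rintro ⟨c, hc⟩; exact ⟨c ∘ φ, by simpa using hc.of_iso φ.symm⟩

lemma starFree_of_iso {V W : Type*} {G : SimpleGraph V} {H : SimpleGraph W}
    (φ : G ≃g H) {t : ℕ} (h : StarFree t H) : StarFree t G := by
  constructor
  intro f
  exact h.false (φ.toEmbedding.comp f)

/-- For any `t ≥ 3` and `k ≥ 1` there is a finite `K_{1,t}`-free graph `G` with
`χ(G) = k` and `φ(G) = (t-1)(k-1) + 1`. -/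
theorem exists_starFree_graph_bChromaticNumber_eq (t k : ℕ) (ht : 3 ≤ t) (hk : 1 ≤ k) :
    ∃ (n : ℕ) (G : SimpleGraph (Fin n)),
      StarFree t G ∧ G.chromaticNumber = (k : ℕ∞) ∧
      bChromaticNumber G = (t - 1) * (k - 1) + 1 := by
  set b := (t-1)*(k-1)+1 with hb
  set e : Fin b × Fin b ≃ Fin (b*b) := finProdFinEquiv with he
  refine ⟨b*b, (BGraph t k).comap e.symm.toEmbedding, ?_, ?_, ?_⟩
  · exact starFree_of_iso (SimpleGraph.Iso.comap e.symm (BGraph t k)) (bgraph_starFree t k ht)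
  · erw [le_antisymm
      (chromaticNumber_mono_of_hom (SimpleGraph.Iso.comap e.symm (BGraph t k)).toEmbedding.toHom)
      (chromaticNumber_mono_of_hom (SimpleGraph.Iso.comap e.symm (BGraph t k)).symm.toEmbedding.toHom)]
    exact bgraph_chromatic t k ht hk
  · erw [bChromaticNumber_iso (SimpleGraph.Iso.comap e.symm (BGraph t k))]
    exact bgraph_bchromatic t k ht hk
end

section
/- For any positive integers k ≥ 2 and ω divisible by 2k-1, there exists a finite simple graph G with clique partition number θ(G) = k and clique number ω(G) = ω such that the b-chromatic number of G satisfies φ(G) = k²·ω/(2k-1). -/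
open SimpleGraph

/-- The clique partition number `θ(G)`: the minimum number of parts in a partition
of the vertex set of `G` into cliques (given as fibers of a map to `Fin k`). -/
noncomputable def cliquePartitionNumber {V : Type*} (G : SimpleGraph V) : ℕ :=
  sInf {k | ∃ f : V → Fin k, ∀ i : Fin k, G.IsClique {v | f v = i}}

namespace BCaux

/-- vertices: tuples (i, a, b, s) with i = a or i = b -/
abbrev Vt (k m : ℕ) := {x : Fin k × Fin k × Fin k × Fin m // x.1 = x.2.1 ∨ x.1 = x.2.2.1}

variable {k m : ℕ}

def vi (w : Vt k m) : Fin k := w.1.1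
def va (w : Vt k m) : Fin k := w.1.2.1
def vb (w : Vt k m) : Fin k := w.1.2.2.1
def vs (w : Vt k m) : Fin m := w.1.2.2.2

lemma vmem (w : Vt k m) : vi w = va w ∨ vi w = vb w := w.2

lemma vext {v w : Vt k m} (h1 : vi v = vi w) (h2 : va v = va w)
    (h3 : vb v = vb w) (h4 : vs v = vs w) : v = w := by
  obtain ⟨⟨i, a, b, s⟩, h⟩ := v
  obtain ⟨⟨i', a', b', s'⟩, h'⟩ := w
  simp only [vi, va, vb, vs] at h1 h2 h3 h4
  subst h1 h2 h3 h4; rfl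

def Cr (v w : Vt k m) : Prop := vi v = va v ∧ vi w = vb w ∧ va w ≠ vi v ∧ vb w ≠ vi v

def Gr (k m : ℕ) : SimpleGraph (Vt k m) where
  Adj v w := v ≠ w ∧ (vi v = vi w ∨ Cr v w ∨ Cr w v)
  symm := by
    constructor
    rintro v w ⟨h1, h2⟩
    rcases h2 with h | h | h
    exacts [⟨h1.symm, Or.inl h.symm⟩, ⟨h1.symm, Or.inr (Or.inr h)⟩, ⟨h1.symm, Or.inr (Or.inl h)⟩]
  loopless := ⟨fun v h => h.1 rfl⟩

lemma adj_same {v w : Vt k m} (h : vi v = vi w) (hne : v ≠ w) : (Gr k m).Adj v w :=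
  ⟨hne, Or.inl h⟩

lemma not_adj_guest_guest {v w : Vt k m} (hv : vi v ≠ va v) (hw : vi w ≠ va w)
    (hij : vi v ≠ vi w) : ¬ (Gr k m).Adj v w := by
  rintro ⟨-, h | h | h⟩
  · exact hij h
  · exact hv h.1
  · exact hw h.1

lemma not_adj_pureown {v w : Vt k m} (hv : vi v ≠ vb v) (hw : vi w ≠ vb w)
    (hij : vi v ≠ vi w) : ¬ (Gr k m).Adj v w := by
  rintro ⟨-, h | h | h⟩
  · exact hij h
  · exact hw h.2.1
  · exact hv h.2.1

end BCaux

namespace BCaux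

variable {k m : ℕ}

abbrev Col (k m : ℕ) := Fin k × Fin k × Fin m

def triple (w : Vt k m) : Col k m := (va w, vb w, vs w)

/-- adjacent vertices have different triples -/
lemma triple_ne_of_adj {v w : Vt k m} (h : (Gr k m).Adj v w) : triple v ≠ triple w := by
  intro he
  simp only [triple, Prod.mk.injEq] at he
  rcases h with ⟨hne, hs | hc | hc⟩
  · exact hne (vext hs he.1 he.2.1 he.2.2)
  · exact hc.2.2.1 (by rw [← he.1, ← hc.1])
  · exact hc.2.2.1 (by rw [he.1, ← hc.1])

def EC (k m : ℕ) : Col k m ≃ Fin (k * k * m) :=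
  (Equiv.prodAssoc (Fin k) (Fin k) (Fin m)).symm.trans
    ((finProdFinEquiv.prodCongr (Equiv.refl (Fin m))).trans finProdFinEquiv)

/-- the canonical coloring -/
def col (k m : ℕ) (w : Vt k m) : Fin (k * k * m) := EC k m (triple w)

lemma col_isBColoring : IsBColoring (Gr k m) (k * k * m) (col k m) := by
  constructor
  · intro v w h he
    exact triple_ne_of_adj h ((EC k m).injective he)
  · intro i
    set p : Col k m := (EC k m).symm i with hp
    set v : Vt k m := ⟨(p.1, p.1, p.2.1, p.2.2), Or.inl rfl⟩ with hv
    have hcv : col k m v = i := by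
      show EC k m (p.1, p.2.1, p.2.2) = i
      rw [hp]; simp
    refine ⟨v, hcv, ?_⟩
    intro j hj
    rw [hcv] at hj
    set q : Col k m := (EC k m).symm j with hq
    have hqp : q ≠ p := by
      intro he
      exact hj (by rw [hq, hp] at he; simpa using congrArg (EC k m) he)
    by_cases hc : q.1 = p.1 ∨ q.2.1 = p.1
    · have hmem : (p.1 : Fin k) = q.1 ∨ (p.1 : Fin k) = q.2.1 := by
        rcases hc with h | h
        · exact Or.inl h.symm
        · exact Or.inr h.symm
      refine ⟨⟨(p.1, q.1, q.2.1, q.2.2), hmem⟩, ⟨?_, Or.inl rfl⟩, ?_⟩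
      · intro he
        apply hqp
        have h2 := congrArg va he
        have h3 := congrArg vb he
        have h4 := congrArg vs he
        simp only [va, vb, vs, hv] at h2 h3 h4
        exact Prod.ext h2.symm (Prod.ext h3.symm h4.symm)
      · show EC k m (q.1, q.2.1, q.2.2) = j
        rw [hq]; simp
    · push_neg at hc
      refine ⟨⟨(q.2.1, q.1, q.2.1, q.2.2), Or.inr rfl⟩, ⟨?_, Or.inr (Or.inl ?_)⟩, ?_⟩
      · intro he
        have h1 := congrArg vi he
        simp only [vi, hv] at h1
        exact hc.2 h1.symm
      · exact ⟨rfl, rfl, hc.1, hc.2⟩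
      · show EC k m (q.1, q.2.1, q.2.2) = j
        rw [hq]; simp

end BCaux

namespace BCaux

variable {k m : ℕ}

lemma bcol_le (hk : 2 ≤ k) (hm : 1 ≤ m) {b : ℕ} {c : Vt k m → Fin b}
    (h : IsBColoring (Gr k m) b c) : b ≤ k * k * m := by
  by_contra hb
  push_neg at hb
  have hassoc : k * k * m = k * (k * m) := mul_assoc k k m
  choose v hv1 hv2 using h.2
  have hsec : ∀ i : Fin b, vi (v i) = vb (v i) := by
    intro i
    by_contra hpure
    have hown : vi (v i) = va (v i) := (vmem (v i)).resolve_right hpure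
    have hv2i : ∀ j : Fin b, j ≠ i → ∃ w, (Gr k m).Adj (v i) w ∧ c w = j := by
      intro j hj
      exact hv2 i j (by rw [hv1]; exact hj)
    choose w hw1 hw2 using hv2i
    -- neighbors of v i are determined by their triple
    have hwdet : ∀ w1 w2 : Vt k m, (Gr k m).Adj (v i) w1 → (Gr k m).Adj (v i) w2 →
        triple w1 = triple w2 → w1 = w2 := by
      intro w1 w2 h1 h2 he
      simp only [triple, Prod.mk.injEq] at he
      have key : ∀ u : Vt k m, (Gr k m).Adj (v i) u →
          (vi u = vi (v i)) ∨ (vi u = vb u ∧ va u ≠ vi (v i) ∧ vb u ≠ vi (v i)) := by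
        rintro u ⟨-, hs | hcr | hcr⟩
        · exact Or.inl hs.symm
        · exact Or.inr ⟨hcr.2.1, hcr.2.2.1, hcr.2.2.2⟩
        · exact absurd hcr.2.1 hpure
      rcases key w1 h1 with k1 | k1 <;> rcases key w2 h2 with k2 | k2
      · exact vext (k1.trans k2.symm) he.1 he.2.1 he.2.2
      · exfalso
        rcases vmem w1 with hm1 | hm1
        · exact k2.2.1 (by rw [← he.1, ← hm1, k1])
        · exact k2.2.2 (by rw [← he.2.1, ← hm1, k1])
      · exfalso
        rcases vmem w2 with hm2 | hm2
        · exact k1.2.1 (by rw [he.1, ← hm2, k2])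
        · exact k1.2.2 (by rw [he.2.1, ← hm2, k2])
      · exact vext (by rw [k1.1, k2.1, he.2.1]) he.1 he.2.1 he.2.2
    have hne : ∀ (j : Fin b) (hj : j ≠ i), triple (w j hj) ≠ triple (v i) := by
      intro j hj he
      simp only [triple, Prod.mk.injEq] at he
      rcases hw1 j hj with ⟨hne', hs | hcr | hcr⟩
      · apply hj
        have : w j hj = v i := vext hs.symm he.1 he.2.1 he.2.2
        rw [← hw2 j hj, this, hv1]
      · exact hcr.2.2.1 (he.1.trans hown.symm)
      · exact hpure hcr.2.1
    have hinj : Function.Injective (fun j : {j : Fin b // j ≠ i} =>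
        (⟨triple (w j.1 j.2), hne j.1 j.2⟩ : {p : Col k m // p ≠ triple (v i)})) := by
      intro j j' he
      simp only [Subtype.mk.injEq] at he
      have := hwdet _ _ (hw1 j.1 j.2) (hw1 j'.1 j'.2) he
      have : c (w j.1 j.2) = c (w j'.1 j'.2) := by rw [this]
      rw [hw2, hw2] at this
      exact Subtype.ext this
    have hcard := Fintype.card_le_of_injective _ hinj
    simp only [Ne, Fintype.card_subtype_compl, Fintype.card_subtype_eq,
      Fintype.card_fin, Fintype.card_prod] at hcard
    have hpos : 0 < k * (k * m) := Nat.mul_pos (by omega) (Nat.mul_pos (by omega) (by omega))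
    rw [hassoc] at hb
    generalize hgen : k * (k * m) = X at hb hcard hpos
    omega
  have hfin : Function.Injective
      (fun i : Fin b => ((va (v i), vi (v i), vs (v i)) : Fin k × Fin k × Fin m)) := by
    intro i i' he
    simp only [Prod.mk.injEq] at he
    have hv : v i = v i' :=
      vext he.2.1 he.1 (by rw [← hsec i, ← hsec i', he.2.1]) he.2.2
    rw [← hv1 i, ← hv1 i', hv]
  have hcard := Fintype.card_le_of_injective _ hfin
  simp only [Fintype.card_fin, Fintype.card_prod] at hcard
  have hpos : 0 < k * (k * m) := Nat.mul_pos (by omega) (Nat.mul_pos (by omega) (by omega))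
  rw [hassoc] at hb
  generalize hgen : k * (k * m) = X at hb hcard hpos
  omega

end BCaux

namespace BCaux

variable {k m : ℕ}

lemma bchrom_eq (hk : 2 ≤ k) (hm : 1 ≤ m) :
    bChromaticNumber (Gr k m) = k * k * m := by
  unfold bChromaticNumber
  apply IsGreatest.csSup_eq
  constructor
  · exact ⟨col k m, col_isBColoring⟩
  · rintro b ⟨c, hc⟩
    exact bcol_le hk hm hc

lemma clique_card_le (hk : 2 ≤ k) {s : Finset (Vt k m)} (hs : (Gr k m).IsClique s) :
    s.card ≤ (2 * k - 1) * m := by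
  classical
  have hsplit1 := Finset.card_filter_add_card_filter_not
    (s := s) (p := fun w => va w = vb w)
  have hsplit2 := Finset.card_filter_add_card_filter_not
    (s := s.filter (fun w => ¬ va w = vb w)) (p := fun w => vi w = va w)
  set D := s.filter (fun w => va w = vb w) with hDdef
  set P := (s.filter (fun w => ¬ va w = vb w)).filter (fun w => vi w = va w) with hPdef
  set Gu := (s.filter (fun w => ¬ va w = vb w)).filter (fun w => ¬ vi w = va w) with hGudef
  have hDmem : ∀ w ∈ D, w ∈ s ∧ vi w = va w ∧ va w = vb w := by
    intro w hw
    rw [hDdef, Finset.mem_filter] at hw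
    refine ⟨hw.1, ?_, hw.2⟩
    rcases vmem w with h | h
    · exact h
    · exact h.trans hw.2.symm
  have hPmem : ∀ w ∈ P, w ∈ s ∧ vi w = va w ∧ va w ≠ vb w := by
    intro w hw
    rw [hPdef, Finset.mem_filter, Finset.mem_filter] at hw
    exact ⟨hw.1.1, hw.2, hw.1.2⟩
  have hGumem : ∀ w ∈ Gu, w ∈ s ∧ vi w = vb w ∧ vi w ≠ va w := by
    intro w hw
    rw [hGudef, Finset.mem_filter, Finset.mem_filter] at hw
    refine ⟨hw.1.1, ?_, hw.2⟩
    rcases vmem w with h | h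
    · exact absurd h hw.2
    · exact h
  -- diagonal bound
  have hDcard : D.card ≤ k * m := by
    have hmap : ∀ w ∈ D, ((vi w, vs w) : Fin k × Fin m) ∈ (Finset.univ : Finset (Fin k × Fin m)) :=
      fun w _ => Finset.mem_univ _
    have hinj : Set.InjOn (fun w => ((vi w, vs w) : Fin k × Fin m)) D := by
      intro x hx y hy he
      simp only [Prod.mk.injEq] at he
      obtain ⟨-, hx1, hx2⟩ := hDmem x hx
      obtain ⟨-, hy1, hy2⟩ := hDmem y hy
      exact vext he.1 (by rw [← hx1, ← hy1, he.1]) (by rw [← hx2, ← hy2, ← hx1, ← hy1, he.1]) he.2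
    have := Finset.card_le_card_of_injOn _ hmap hinj
    simpa using this
  -- pure own bound
  have hPcard : P.card ≤ (k - 1) * m := by
    rcases P.eq_empty_or_nonempty with he | ⟨w0, hw0⟩
    · simp [he]
    · have hPsame : ∀ w ∈ P, vi w = vi w0 := by
        intro w hw
        by_contra hne
        obtain ⟨hws, hw1, hw2⟩ := hPmem w hw
        obtain ⟨h0s, h01, h02⟩ := hPmem w0 hw0
        have hwne : w ≠ w0 := fun h => hne (by rw [h])
        exact not_adj_pureown (fun h => hw2 (hw1.symm.trans h))
          (fun h => h02 (h01.symm.trans h)) hne (hs hws h0s hwne)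
      have hmap : ∀ w ∈ P,
          ((vb w, vs w) : Fin k × Fin m) ∈ (Finset.univ.erase (vi w0)) ×ˢ Finset.univ := by
        intro w hw
        obtain ⟨-, hw1, hw2⟩ := hPmem w hw
        rw [Finset.mem_product, Finset.mem_erase]
        exact ⟨⟨fun h => hw2 ((hw1.symm.trans (hPsame w hw)).trans h.symm), Finset.mem_univ _⟩,
          Finset.mem_univ _⟩
      have hinj : Set.InjOn (fun w => ((vb w, vs w) : Fin k × Fin m)) P := by
        intro x hx y hy he
        simp only [Prod.mk.injEq] at he
        obtain ⟨-, hx1, -⟩ := hPmem x hx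
        obtain ⟨-, hy1, -⟩ := hPmem y hy
        have hvi : vi x = vi y := (hPsame x hx).trans (hPsame y hy).symm
        exact vext hvi (by rw [← hx1, ← hy1, hvi]) he.1 he.2
      have := Finset.card_le_card_of_injOn _ hmap hinj
      simpa [Finset.card_erase_of_mem] using this
  rcases Gu.eq_empty_or_nonempty with hGe | ⟨g0, hg0⟩
  · rw [hGe, Finset.card_empty] at hsplit2
    have harith : k * m + (k - 1) * m = (2 * k - 1) * m := by
      rw [← add_mul]
      congr 1
      omega
    linarith
  · -- guests present
    have hGsame : ∀ w ∈ Gu, vi w = vi g0 := by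
      intro w hw
      by_contra hne
      obtain ⟨hws, hw1, hw2⟩ := hGumem w hw
      obtain ⟨h0s, h01, h02⟩ := hGumem g0 hg0
      have hwne : w ≠ g0 := fun h => hne (by rw [h])
      exact not_adj_guest_guest hw2 h02 hne (hs hws h0s hwne)
    set H := Gu.image va with hHdef
    have hHk : H.card ≤ k := by
      calc H.card ≤ (Finset.univ : Finset (Fin k)).card := Finset.card_le_univ H
      _ = k := by simp
    have hGucard : Gu.card ≤ H.card * m := by
      have hmap : ∀ w ∈ Gu, ((va w, vs w) : Fin k × Fin m) ∈ H ×ˢ Finset.univ := by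
        intro w hw
        rw [Finset.mem_product]
        exact ⟨Finset.mem_image_of_mem va hw, Finset.mem_univ _⟩
      have hinj : Set.InjOn (fun w => ((va w, vs w) : Fin k × Fin m)) Gu := by
        intro x hx y hy he
        simp only [Prod.mk.injEq] at he
        obtain ⟨-, hx1, -⟩ := hGumem x hx
        obtain ⟨-, hy1, -⟩ := hGumem y hy
        have hvi : vi x = vi y := (hGsame x hx).trans (hGsame y hy).symm
        exact vext hvi he.1 (by rw [← hx1, ← hy1, hvi]) he.2
      have := Finset.card_le_card_of_injOn _ hmap hinj
      simpa using this
    have hDcard2 : D.card ≤ (k - H.card) * m := by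
      have hmap : ∀ w ∈ D,
          ((vi w, vs w) : Fin k × Fin m) ∈ (Finset.univ \ H) ×ˢ Finset.univ := by
        intro w hw
        obtain ⟨hws, hw1, hw2⟩ := hDmem w hw
        rw [Finset.mem_product, Finset.mem_sdiff]
        refine ⟨⟨Finset.mem_univ _, ?_⟩, Finset.mem_univ _⟩
        intro hmem
        rw [hHdef, Finset.mem_image] at hmem
        obtain ⟨u, hu, hu2⟩ := hmem
        obtain ⟨hus, hu1, hu3⟩ := hGumem u hu
        have hu2' : va u = vi w := hu2
        -- u is a guest with va u = vi w, w is diagonal: they can't be adjacent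
        have hne : w ≠ u := by
          intro h
          rw [h] at hw1 hw2
          exact hu3 hw1
        have hadj := hs hws hus hne
        rcases hadj with ⟨-, hsame | hcr | hcr⟩
        · -- same clique: vi w = vi u, but vi u = vb u and va u = vi w with vi u ≠ va u
          exact hu3 (hsame.symm.trans hu2'.symm)
        · -- Cr w u needs va u ≠ vi w
          exact hcr.2.2.1 hu2'
        · -- Cr u w needs vi u = va u
          exact hu3 hcr.1
      have hinj : Set.InjOn (fun w => ((vi w, vs w) : Fin k × Fin m)) D := by
        intro x hx y hy he
        simp only [Prod.mk.injEq] at he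
        obtain ⟨-, hx1, hx2⟩ := hDmem x hx
        obtain ⟨-, hy1, hy2⟩ := hDmem y hy
        exact vext he.1 (by rw [← hx1, ← hy1, he.1]) (by rw [← hx2, ← hy2, ← hx1, ← hy1, he.1]) he.2
      have := Finset.card_le_card_of_injOn _ hmap hinj
      have hcardt : ((Finset.univ \ H) ×ˢ (Finset.univ : Finset (Fin m))).card = (k - H.card) * m := by
        rw [Finset.card_product, Finset.card_sdiff_of_subset (Finset.subset_univ H)]
        simp
      rw [hcardt] at this
      exact this
    have harith : (k - H.card) * m + (k - 1) * m + H.card * m = (2 * k - 1) * m := by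
      rw [← add_mul, ← add_mul]
      congr 1
      omega
    linarith

lemma cliqueNum_eq (hk : 2 ≤ k) (hm : 1 ≤ m) :
    (Gr k m).cliqueNum = (2 * k - 1) * m := by
  unfold SimpleGraph.cliqueNum
  apply IsGreatest.csSup_eq
  constructor
  · -- exhibit a clique of size (2k-1)m : the clique Q_0
    have hz : 0 < k := by omega
    set z : Fin k := ⟨0, hz⟩ with hzdef
    set φ : (Fin k ⊕ Fin (k - 1)) × Fin m → Vt k m := fun x =>
      match x with
      | (Sum.inl b, s) => ⟨(z, z, b, s), Or.inl rfl⟩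
      | (Sum.inr a, s) => ⟨(z, ⟨a.1 + 1, by omega⟩, z, s), Or.inr rfl⟩
      with hφdef
    have hφinj : Function.Injective φ := by
      rintro ⟨x1, s1⟩ ⟨x2, s2⟩ he
      have he' := congrArg Subtype.val he
      match x1, x2 with
      | Sum.inl b1, Sum.inl b2 =>
        simp only [hφdef, Prod.mk.injEq] at he'
        rw [he'.2.2.1, he'.2.2.2]
      | Sum.inl b1, Sum.inr a2 =>
        simp only [hφdef, Prod.mk.injEq] at he'
        exact absurd (congrArg Fin.val he'.2.1) (by simp [hzdef])
      | Sum.inr a1, Sum.inl b2 =>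
        simp only [hφdef, Prod.mk.injEq] at he'
        exact absurd (congrArg Fin.val he'.2.1) (by simp [hzdef])
      | Sum.inr a1, Sum.inr a2 =>
        simp only [hφdef, Prod.mk.injEq] at he'
        have : a1 = a2 := by
          have := congrArg Fin.val he'.2.1
          simp only at this
          exact Fin.ext (by omega)
        rw [this, he'.2.2.2]
    refine ⟨Finset.univ.image φ, ?_, ?_⟩
    · intro x hx y hy hne
      simp only [Finset.coe_image, Set.mem_image] at hx hy
      obtain ⟨px, -, hpx⟩ := hx
      obtain ⟨py, -, hpy⟩ := hy
      have hvx : vi x = z := by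
        rw [← hpx]; match px with
        | (Sum.inl b, s) => rfl
        | (Sum.inr a, s) => rfl
      have hvy : vi y = z := by
        rw [← hpy]; match py with
        | (Sum.inl b, s) => rfl
        | (Sum.inr a, s) => rfl
      exact adj_same (hvx.trans hvy.symm) hne
    · rw [Finset.card_image_of_injective _ hφinj]
      simp only [Finset.card_univ, Fintype.card_prod, Fintype.card_sum, Fintype.card_fin]
      congr 1
      omega
  · rintro n ⟨s, hs⟩
    rw [← hs.2]
    exact clique_card_le hk hs.1

lemma cpn_eq (hk : 2 ≤ k) (hm : 1 ≤ m) :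
    cliquePartitionNumber (Gr k m) = k := by
  unfold cliquePartitionNumber
  apply IsLeast.csInf_eq
  constructor
  · refine ⟨fun w => vi w, fun i => ?_⟩
    intro x hx y hy hne
    exact adj_same (hx.trans hy.symm) hne
  · rintro t ⟨f, hf⟩
    have hm0 : 0 < m := hm
    have hk0 : 0 < k := by omega
    have hk1 : 1 < k := hk
    obtain ⟨σ, hσ⟩ : ∃ σ : Fin k → Fin k, ∀ a, σ a ≠ a := by
      refine ⟨fun a => if a = ⟨0, hk0⟩ then ⟨1, hk1⟩ else ⟨0, hk0⟩, ?_⟩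
      intro a
      simp only []
      split_ifs with h
      · rw [h]
        intro he
        exact absurd (congrArg Fin.val he) (by simp)
      · exact fun he => h he.symm
    set g : Fin k → Vt k m := fun a => ⟨(a, σ a, a, ⟨0, hm0⟩), Or.inr rfl⟩ with hgdef
    have hinj : Function.Injective (fun a => f (g a)) := by
      intro a a' he
      by_contra hne
      have hgne : g a ≠ g a' := by
        intro h
        exact hne (congrArg vi h)
      have hclique := hf (f (g a))
      have hadj := hclique (show g a ∈ {v | f v = f (g a)} from rfl)
        (show g a' ∈ {v | f v = f (g a)} from he.symm) hgne
      have hva : vi (g a) ≠ va (g a) := fun h => hσ a h.symm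
      have hva' : vi (g a') ≠ va (g a') := fun h => hσ a' h.symm
      have hvine : vi (g a) ≠ vi (g a') := hne
      exact not_adj_guest_guest hva hva' hvine hadj
    have := Fintype.card_le_of_injective _ hinj
    simpa using this

end BCaux

section Transfer

variable {V W : Type*} (e : V ≃ W) (G : SimpleGraph W)

lemma bChrom_comap : bChromaticNumber (G.comap e) = bChromaticNumber G := by
  unfold bChromaticNumber
  congr 1
  ext b
  constructor
  · rintro ⟨c, hc1, hc2⟩
    refine ⟨c ∘ e.symm, ?_, ?_⟩
    · intro v w hvw
      have : (G.comap e).Adj (e.symm v) (e.symm w) := by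
        simp only [SimpleGraph.comap_adj, Equiv.apply_symm_apply]
        exact hvw
      exact hc1 _ _ this
    · intro i
      obtain ⟨v, hv, hv2⟩ := hc2 i
      refine ⟨e v, by simp [hv], ?_⟩
      intro j hj
      obtain ⟨w, hw, hw2⟩ := hv2 j (by simpa using hj)
      refine ⟨e w, ?_, by simpa using hw2⟩
      simp only [SimpleGraph.comap_adj, Equiv.apply_symm_apply] at hw ⊢
      exact hw
  · rintro ⟨c, hc1, hc2⟩
    refine ⟨c ∘ e, ?_, ?_⟩
    · intro v w hvw
      exact hc1 _ _ hvw
    · intro i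
      obtain ⟨v, hv, hv2⟩ := hc2 i
      refine ⟨e.symm v, by simpa using hv, ?_⟩
      intro j hj
      obtain ⟨w, hw, hw2⟩ := hv2 j (by simpa using hj)
      refine ⟨e.symm w, ?_, by simpa using hw2⟩
      simp only [SimpleGraph.comap_adj, Function.comp_apply, Equiv.apply_symm_apply]
      exact hw

lemma cpn_comap : cliquePartitionNumber (G.comap e) = cliquePartitionNumber G := by
  unfold cliquePartitionNumber
  congr 1
  ext t
  constructor
  · rintro ⟨f, hf⟩
    refine ⟨f ∘ e.symm, fun i => ?_⟩
    intro x hx y hy hne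
    have := hf i (show e.symm x ∈ {v | f v = i} from hx) (show e.symm y ∈ {v | f v = i} from hy)
      (fun h => hne (by simpa using congrArg e h))
    simpa only [SimpleGraph.comap_adj, Equiv.apply_symm_apply] using this
  · rintro ⟨f, hf⟩
    refine ⟨f ∘ e, fun i => ?_⟩
    intro x hx y hy hne
    have := hf i (show e x ∈ {v | f v = i} from hx) (show e y ∈ {v | f v = i} from hy)
      (fun h => hne (e.injective h))
    exact this

lemma cliqueNum_comap : (G.comap ⇑e).cliqueNum = G.cliqueNum := by
  unfold SimpleGraph.cliqueNum
  congr 1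
  ext n
  constructor
  · rintro ⟨s, hs1, hs2⟩
    refine ⟨s.map e.toEmbedding, ?_, by rw [Finset.card_map]; exact hs2⟩
    intro x hx y hy hne
    simp only [Finset.coe_map, Set.mem_image, Finset.mem_coe, Equiv.coe_toEmbedding] at hx hy
    obtain ⟨u, hu, hux⟩ := hx
    obtain ⟨v, hv, hvy⟩ := hy
    have huv : u ≠ v := fun h => hne (by rw [← hux, ← hvy, h])
    have := hs1 hu hv huv
    rw [SimpleGraph.comap_adj] at this
    rw [← hux, ← hvy]
    exact this
  · rintro ⟨s, hs1, hs2⟩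
    refine ⟨s.map e.symm.toEmbedding, ?_, by rw [Finset.card_map]; exact hs2⟩
    intro x hx y hy hne
    simp only [Finset.coe_map, Set.mem_image, Finset.mem_coe, Equiv.coe_toEmbedding] at hx hy
    obtain ⟨u, hu, hux⟩ := hx
    obtain ⟨v, hv, hvy⟩ := hy
    have huv : u ≠ v := fun h => hne (by rw [← hux, ← hvy, h])
    rw [SimpleGraph.comap_adj]
    rw [← hux, ← hvy]
    simp only [Equiv.apply_symm_apply]
    exact hs1 hu hv huv

end Transfer


/-- For any `k ≥ 2` and `ω > 0` divisible by `2k - 1`, there is a finite graph `G` with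
`θ(G) = k`, `ω(G) = ω` and `φ(G) = k²·ω/(2k-1)`. -/
theorem exists_graph_cliquePartition_bChromaticNumber_eq (k ω : ℕ) (hk : 2 ≤ k)
    (hω : 0 < ω) (hdvd : (2 * k - 1) ∣ ω) :
    ∃ (n : ℕ) (G : SimpleGraph (Fin n)),
      cliquePartitionNumber G = k ∧ G.cliqueNum = ω ∧
      bChromaticNumber G = k ^ 2 * ω / (2 * k - 1) := by
  obtain ⟨m, hm⟩ := hdvd
  have hm1 : 1 ≤ m := by
    rcases Nat.eq_zero_or_pos m with h | h
    · rw [h, Nat.mul_zero] at hm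
      omega
    · exact h
  set n := Fintype.card (BCaux.Vt k m) with hn
  set eq : Fin n ≃ BCaux.Vt k m := (Fintype.equivFin (BCaux.Vt k m)).symm with heq
  refine ⟨n, (BCaux.Gr k m).comap eq, ?_, ?_, ?_⟩
  · rw [cpn_comap]
    exact BCaux.cpn_eq hk hm1
  · rw [cliqueNum_comap]
    rw [BCaux.cliqueNum_eq hk hm1]
    exact hm.symm
  · rw [bChrom_comap]
    rw [BCaux.bchrom_eq hk hm1]
    rw [hm]
    have h1 : k ^ 2 * ((2 * k - 1) * m) = (2 * k - 1) * (k ^ 2 * m) := by ring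
    rw [h1, Nat.mul_div_cancel_left _ (show 0 < 2 * k - 1 by omega), pow_two]
end
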